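/- Let A be a ring with property (SF) which satisfies the strong rank condition. Let Q be a k×m matrix over A, let F be a k×t matrix whose columns are right-linearly independent and whose column space M := R_F contains the column space R_Q, and let B be the t×m matrix with Q = F·B. Then the extension R_Q ≤ M is algebraic if and only if the left A-submodule of A^m generated by the rows of B (which is a free left A-module) has rank equal to t. -/

import Mathlib

/-!
Left multiplication by `F` is an injective right-linear map `A^t → A^k` carrying the column
space `R_B` of `B` onto `R_Q` and `A^t` onto `R_F`, so the question is whether `R_B ≤ A^t` is
algebraic. Both this and the rank condition say that the rows of `B` are left-linearly
independent. A relation `g ᵥ* B = 0` with `g ≠ 0` puts `R_B` into the kernel of `x ↦ g ⬝ᵥ x`, a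
proper free factor of `A^t` because its image, a right ideal, is free by (SF). Conversely a proper
free factor `L ⊇ R_B` has rank `< t`, so the `t` rows of a matrix whose columns form a basis of
`L` satisfy a nontrivial relation, which kills `B` too. On the row side, (SF) splits
`g ↦ g ᵥ* B` onto the row space with free kernel, and the strong rank condition forces that
kernel to vanish when the row space has rank `t`.
-/

universe u v

/-- Property (SF): every submodule of every free `A`-module is a free `A`-module. -/
def HasSF (A : Type u) [Ring A] : Prop :=
  ∀ (M : Type v) [AddCommGroup M] [Module A M], Module.Free A M →
    ∀ N : Submodule A M, Module.Free A ↥N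

/-- `M` is a free factor of `N` (written `M ≤* N`): `M ≤ N` and there is a submodule
`M' ≤ N` with `M ⊓ M' = ⊥` and `M ⊔ M' = N` such that `M'` is a free module. -/
def IsFreeFactor {A : Type*} [Ring A] {P : Type*} [AddCommGroup P] [Module A P]
    (M N : Submodule A P) : Prop :=
  M ≤ N ∧ ∃ M' : Submodule A P, M' ≤ N ∧ M ⊓ M' = ⊥ ∧ M ⊔ M' = N ∧ Module.Free A ↥M'

/-- The extension `M ≤ N` is algebraic: the only submodule `L` with `M ≤ L ≤ N`
which is a free factor of `N` is `L = N`. -/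
def IsAlgExt {A : Type*} [Ring A] {P : Type*} [AddCommGroup P] [Module A P]
    (M N : Submodule A P) : Prop :=
  M ≤ N ∧ ∀ L : Submodule A P, M ≤ L → IsFreeFactor L N → L = N

/-- The column space of a matrix `Q`: the right `A`-submodule (i.e. `Aᵐᵒᵖ`-submodule)
of `A^k` generated by the columns of `Q`. -/
def colSpace {A : Type u} [Ring A] {k m : ℕ} (Q : Matrix (Fin k) (Fin m) A) :
    Submodule Aᵐᵒᵖ (Fin k → A) :=
  Submodule.span Aᵐᵒᵖ (Set.range fun j => fun i => Q i j)

/-- The row space of a matrix `Q`: the left `A`-submodule of `A^m` generated by the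
rows of `Q`. -/
def rowSpace {A : Type u} [Ring A] {k m : ℕ} (Q : Matrix (Fin k) (Fin m) A) :
    Submodule A (Fin m → A) :=
  Submodule.span A (Set.range fun i => fun j => Q i j)

open Matrix Module Submodule LinearMap MulOpposite

theorem Cardinal.lt_of_add_eq_natCast {a b : Cardinal} {n : ℕ} (h : a + b = n) (hb : b ≠ 0) :
    a < n := by
  have hn : (n : Cardinal) < Cardinal.aleph0 := Cardinal.natCast_lt_aleph0
  obtain ⟨i, rfl⟩ := Cardinal.lt_aleph0.1 ((le_self_add.trans h.le).trans_lt hn)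
  obtain ⟨j, rfl⟩ := Cardinal.lt_aleph0.1 ((le_add_self.trans h.le).trans_lt hn)
  norm_cast at h hb ⊢
  omega

section FreeFactor

variable {R M N : Type*} [Ring R] [AddCommGroup M] [Module R M] [AddCommGroup N] [Module R N]

theorem isFreeFactor_top_iff {L : Submodule R M} :
    IsFreeFactor L ⊤ ↔ ∃ L' : Submodule R M, IsCompl L L' ∧ Module.Free R L' := by
  simp only [IsFreeFactor, le_top, true_and, isCompl_iff, disjoint_iff, codisjoint_iff, and_assoc]

theorem exists_isCompl_ker_of_projective_range (f : M →ₗ[R] N) [Projective R (range f)] :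
    ∃ q : Submodule R M, IsCompl (ker f) q := by
  obtain ⟨s, hs⟩ := projective_lifting_property f.rangeRestrict LinearMap.id
    f.surjective_rangeRestrict
  have hidem : IsIdempotentElem (s ∘ₗ f.rangeRestrict) := by
    rw [IsIdempotentElem, Module.End.mul_eq_comp, comp_assoc, ← comp_assoc f.rangeRestrict s, hs,
      id_comp]
  -- `s` is a section of the corestriction, hence injective, so `s ∘ f` has kernel `ker f`.
  refine ⟨range (s ∘ₗ f.rangeRestrict), ?_⟩
  simpa only [ker_comp_of_ker_eq_bot _ (ker_eq_bot_of_inverse hs), ker_rangeRestrict]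
    using hidem.isCompl.symm

theorem isFreeFactor_ker_of_free_range (f : M →ₗ[R] N) [Module.Free R (range f)] :
    IsFreeFactor (ker f) ⊤ := by
  obtain ⟨q, hq⟩ := exists_isCompl_ker_of_projective_range f
  exact isFreeFactor_top_iff.2 ⟨q, hq, .of_equiv (f.kerComplementEquivRange hq.symm).symm⟩

section Map

variable {ψ : M →ₗ[R] N}

theorem free_map_iff (hψ : Function.Injective ψ) {p : Submodule R M} :
    Module.Free R (p.map ψ) ↔ Module.Free R p :=
  ⟨fun _ => .of_equiv (p.equivMapOfInjective ψ hψ).symm,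
    fun _ => .of_equiv (p.equivMapOfInjective ψ hψ)⟩

theorem isFreeFactor_map_iff (hψ : Function.Injective ψ) {p q : Submodule R M} :
    IsFreeFactor (p.map ψ) (q.map ψ) ↔ IsFreeFactor p q := by
  have hmap := map_injective_of_injective hψ
  constructor
  · rintro ⟨hpq, p', hp'q, hinf, hsup, hfree⟩
    obtain ⟨r, rfl⟩ : ∃ r : Submodule R M, r.map ψ = p' :=
      ⟨_, map_comap_eq_of_le (hp'q.trans map_le_range)⟩
    refine ⟨(map_le_map_iff_of_injective hψ _ _).1 hpq, r,
      (map_le_map_iff_of_injective hψ _ _).1 hp'q, hmap ?_, hmap ?_, (free_map_iff hψ).1 hfree⟩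
    · rwa [map_inf _ hψ, Submodule.map_bot]
    · rwa [Submodule.map_sup]
  · rintro ⟨hpq, p', hp'q, hinf, hsup, hfree⟩
    refine ⟨map_mono hpq, p'.map ψ, map_mono hp'q, ?_, ?_, (free_map_iff hψ).2 hfree⟩
    · rw [← map_inf _ hψ, hinf, Submodule.map_bot]
    · rw [← Submodule.map_sup, hsup]

theorem isAlgExt_map_iff (hψ : Function.Injective ψ) {p q : Submodule R M} :
    IsAlgExt (p.map ψ) (q.map ψ) ↔ IsAlgExt p q := by
  constructor
  · rintro ⟨hpq, halg⟩
    refine ⟨(map_le_map_iff_of_injective hψ _ _).1 hpq, fun L hpL hL => ?_⟩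
    exact map_injective_of_injective hψ (halg _ (map_mono hpL) ((isFreeFactor_map_iff hψ).2 hL))
  · rintro ⟨hpq, halg⟩
    refine ⟨map_mono hpq, fun L hpL hL => ?_⟩
    obtain ⟨L, rfl⟩ : ∃ L₀ : Submodule R M, L₀.map ψ = L :=
      ⟨_, map_comap_eq_of_le (hL.1.trans map_le_range)⟩
    rw [halg L ((map_le_map_iff_of_injective hψ _ _).1 hpL) ((isFreeFactor_map_iff hψ).1 hL)]

end Map

end FreeFactor

section Rank

variable {R : Type*} {M : Type u} [Ring R] [StrongRankCondition R] [AddCommGroup M] [Module R M]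

theorem rank_add_rank_of_isCompl {p q : Submodule R M} (h : IsCompl p q) [Module.Free R p]
    [Module.Free R q] : Module.rank R p + Module.rank R q = Module.rank R M := by
  rw [← rank_prod', (prodEquivOfIsCompl p q h).rank_eq]

theorem rank_ker_add_rank_range_of_free {N : Type u} [AddCommGroup N] [Module R N]
    (f : M →ₗ[R] N) [Module.Free R (ker f)] [Module.Free R (range f)] :
    Module.rank R (ker f) + Module.rank R (range f) = Module.rank R M := by
  obtain ⟨q, hq⟩ := exists_isCompl_ker_of_projective_range f
  have e := f.kerComplementEquivRange hq.symm
  have : Module.Free R q := .of_equiv e.symm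
  rw [← e.rank_eq, rank_add_rank_of_isCompl hq]

end Rank

section Matrix

variable {A : Type u} [Ring A] {k m s t : ℕ}

instance : Module.Free Aᵐᵒᵖ A := .of_equiv (opLinearEquiv Aᵐᵒᵖ).symm

theorem rank_op_fin_fun [StrongRankCondition Aᵐᵒᵖ] (t : ℕ) :
    Module.rank Aᵐᵒᵖ (Fin t → A) = t :=
  (LinearEquiv.piCongrRight fun _ => opLinearEquiv Aᵐᵒᵖ).rank_eq.trans (rank_fin_fun t)

theorem range_mulVecBilin (F : Matrix (Fin k) (Fin t) A) :
    range (mulVecBilin A Aᵐᵒᵖ F) = colSpace F := by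
  apply le_antisymm
  · rintro _ ⟨x, rfl⟩
    rw [mulVecBilin_apply, mulVec_eq_sum]
    exact sum_mem fun j _ => smul_mem _ _ (subset_span ⟨j, rfl⟩)
  · exact span_le.2 (Set.range_subset_iff.2 fun j => ⟨Pi.single j 1, mulVec_single_one F j⟩)

theorem map_mulVecBilin_colSpace (F : Matrix (Fin k) (Fin t) A) (B : Matrix (Fin t) (Fin m) A) :
    (colSpace B).map (mulVecBilin A Aᵐᵒᵖ F) = colSpace (F * B) := by
  rw [colSpace, Submodule.map_span, ← Set.range_comp]
  rfl

theorem injective_mulVec_of_linearIndependent_col {F : Matrix (Fin k) (Fin t) A}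
    (hF : LinearIndependent Aᵐᵒᵖ F.col) : Function.Injective (F *ᵥ ·) := by
  have hcomb : (F *ᵥ ·) = Fintype.linearCombination Aᵐᵒᵖ F.col ∘ fun x j => op (x j) :=
    funext fun x => (mulVec_eq_sum x F).trans (Fintype.linearCombination_apply ..).symm
  rw [hcomb]
  exact (linearIndependent_iff_injective_fintypeLinearCombination.1 hF).comp
    fun x y h => funext fun j => op_injective (congrFun h j)

theorem colSpace_le_ker_dotProduct_iff (B : Matrix (Fin t) (Fin m) A) (g : Fin t → A) :
    colSpace B ≤ ker (dotProductBilin A Aᵐᵒᵖ g) ↔ g ᵥ* B = 0 := by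
  rw [colSpace, span_le, Set.range_subset_iff, funext_iff]
  rfl

theorem exists_ne_zero_vecMul_eq_zero [StrongRankCondition A] (C : Matrix (Fin t) (Fin s) A)
    (h : s < t) : ∃ g ≠ 0, g ᵥ* C = 0 := by
  have hdep : ¬ Function.Injective C.vecMulLinear := by
    rw [coe_vecMulLinear, vecMul_injective_iff]
    exact fun hC => h.not_ge (by simpa using hC.fintype_card_le_finrank)
  simpa [injective_iff_map_eq_zero, and_comm] using hdep

theorem exists_ne_zero_le_ker_dotProduct [StrongRankCondition A] [StrongRankCondition Aᵐᵒᵖ]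
    (L : Submodule Aᵐᵒᵖ (Fin t → A)) [Module.Free Aᵐᵒᵖ L] (hL : Module.rank Aᵐᵒᵖ L < t) :
    ∃ g ≠ 0, L ≤ ker (dotProductBilin A Aᵐᵒᵖ g) := by
  have : Module.Finite Aᵐᵒᵖ L := rank_lt_aleph0_iff.1 (hL.trans Cardinal.natCast_lt_aleph0)
  let b := Module.finBasis Aᵐᵒᵖ L
  let C : Matrix (Fin t) (Fin (finrank Aᵐᵒᵖ L)) A := Matrix.of fun i l => (b l : Fin t → A) i
  have hC : colSpace C = L := by
    change span Aᵐᵒᵖ (Set.range (L.subtype ∘ b)) = L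
    rw [Set.range_comp, span_image, b.span_eq, Submodule.map_top, range_subtype]
  have hlt : finrank Aᵐᵒᵖ L < t := by
    rw [← finrank_eq_rank] at hL
    exact_mod_cast hL
  obtain ⟨g, hg, hgC⟩ := exists_ne_zero_vecMul_eq_zero C hlt
  exact ⟨g, hg, hC ▸ (colSpace_le_ker_dotProduct_iff C g).2 hgC⟩

theorem isAlgExt_colSpace_top_iff [StrongRankCondition A] [StrongRankCondition Aᵐᵒᵖ]
    (hSFop : HasSF.{u, u} Aᵐᵒᵖ) (B : Matrix (Fin t) (Fin m) A) :
    IsAlgExt (colSpace B) ⊤ ↔ LinearIndependent A B.row := by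
  rw [← vecMul_injective_iff, ← coe_vecMulLinear, injective_iff_map_eq_zero]
  constructor
  · rintro ⟨-, halg⟩ g hg
    have : Module.Free Aᵐᵒᵖ (range (dotProductBilin A Aᵐᵒᵖ g)) := hSFop A inferInstance _
    have hker := halg _ ((colSpace_le_ker_dotProduct_iff B g).2 hg)
      (isFreeFactor_ker_of_free_range _)
    funext i
    simpa using LinearMap.congr_fun (ker_eq_top.1 hker) (Pi.single i 1)
  · intro hB
    refine ⟨le_top, fun L hBL hL => ?_⟩
    obtain ⟨L', hLL', hL'⟩ := isFreeFactor_top_iff.1 hL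
    have : Module.Free Aᵐᵒᵖ L := hSFop _ inferInstance L
    by_contra hne
    have : Nontrivial L' :=
      nontrivial_iff_ne_bot.2 fun h => hne (eq_top_of_isCompl_bot (h ▸ hLL'))
    have hsum := rank_add_rank_of_isCompl hLL'
    rw [rank_op_fin_fun] at hsum
    obtain ⟨g, hg, hLg⟩ := exists_ne_zero_le_ker_dotProduct L
      (Cardinal.lt_of_add_eq_natCast hsum rank_pos_of_free.ne')
    exact hg (hB g ((colSpace_le_ker_dotProduct_iff B g).1 (hBL.trans hLg)))

theorem rank_rowSpace_eq_iff [StrongRankCondition A] (hSF : HasSF.{u, u} A)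
    (B : Matrix (Fin t) (Fin m) A) :
    Module.rank A (rowSpace B) = t ↔ LinearIndependent A B.row := by
  refine ⟨fun hrank => ?_, fun hB => ?_⟩
  · have hrange : range B.vecMulLinear = rowSpace B := range_vecMulLinear B
    have : Module.Free A (range B.vecMulLinear) := hSF _ inferInstance _
    have : Module.Free A (ker B.vecMulLinear) := hSF _ inferInstance _
    have hsum := rank_ker_add_rank_range_of_free B.vecMulLinear
    rw [hrange, hrank, rank_fin_fun, add_comm] at hsum
    have hker : ker B.vecMulLinear = ⊥ := by
      by_contra hne
      have := nontrivial_iff_ne_bot.2 hne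
      exact (Cardinal.lt_of_add_eq_natCast hsum rank_pos_of_free.ne').false
    rw [← vecMul_injective_iff, ← coe_vecMulLinear, ← ker_eq_bot, hker]
  · change Module.rank A (span A (Set.range B.row)) = t
    rw [rank_eq_card_basis (Basis.span hB), Fintype.card_fin]

end Matrix

theorem isAlgExt_iff_rank_qDual_eq_general {A : Type u} [Ring A]
    [StrongRankCondition A] [StrongRankCondition Aᵐᵒᵖ]
    (hSF : HasSF.{u, u} A) (hSFop : HasSF.{u, u} Aᵐᵒᵖ)
    {k m t : ℕ} (Q : Matrix (Fin k) (Fin m) A)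
    (F : Matrix (Fin k) (Fin t) A)
    (hFind : LinearIndependent Aᵐᵒᵖ (fun j => fun i => F i j))
    (B : Matrix (Fin t) (Fin m) A) (hB : Q = F * B) :
    IsAlgExt (colSpace Q) (colSpace F) ↔ Module.rank A ↥(rowSpace B) = t := by
  have hinj : Function.Injective (mulVecBilin A Aᵐᵒᵖ F) :=
    injective_mulVec_of_linearIndependent_col hFind
  rw [hB, ← map_mulVecBilin_colSpace F B, ← range_mulVecBilin F, range_eq_map,
    isAlgExt_map_iff hinj, isAlgExt_colSpace_top_iff hSFop, rank_rowSpace_eq_iff hSF]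

theorem isAlgExt_iff_rank_qDual_eq {A : Type u} [Ring A]
    [StrongRankCondition A] [StrongRankCondition Aᵐᵒᵖ]
    (hSF : HasSF.{u, u} A) (hSFop : HasSF.{u, u} Aᵐᵒᵖ)
    {k m t : ℕ} (Q : Matrix (Fin k) (Fin m) A)
    (F : Matrix (Fin k) (Fin t) A)
    (hFind : LinearIndependent Aᵐᵒᵖ (fun j => fun i => F i j))
    (hQF : colSpace Q ≤ colSpace F)
    (B : Matrix (Fin t) (Fin m) A) (hB : Q = F * B) :
    IsAlgExt (colSpace Q) (colSpace F) ↔ Module.rank A ↥(rowSpace B) = t :=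
  isAlgExt_iff_rank_qDual_eq_general hSF hSFop Q F hFind B hB
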